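/- Realizability by a GUM. Let n ≥ 1, let F be a real n×n matrix, H a real 1×n matrix, N a real n×1 matrix, r₀ ∈ ℝ, and let P be a positive definite real n×n matrix such that the block matrix [[Q(P), S(P)], [S(P)ᵀ, R(P)]] is positive semidefinite and R(P) > 0. Define a = F − R(P)⁻¹ S(P) H, b = H, c = R(P)⁻¹ S(P), β = R(P), α = Q(P) − R(P)⁻¹ S(P) S(P)ᵀ, and η = P. Then: (i) α is positive semidefinite; (ii) a + cb = F; (iii) η = (α + β c cᵀ) + (a + cb) η (a + cb)ᵀ; (iv) β + b η bᵀ = r₀; (v) a η bᵀ + c (β + b η bᵀ) = N; and consequently b (a + cb)^{k−1} (a η bᵀ + c (β + b η bᵀ)) = H F^{k−1} N for all k ≥ 1. -/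

import Mathlib

/-!
Write `S = N - F P Hᵀ` and `R = r₀ - H P Hᵀ`. The gain `c = R⁻¹ S` is chosen so that
`a + c b = F`; then (iii) reduces to `P = Q(P) + F P Fᵀ` because `R c cᵀ = R⁻¹ S Sᵀ`, and (v)
to `a P Hᵀ + r₀ c = F P Hᵀ + S`. Positivity of `α` is the Schur complement of the positive
scalar block `R` in the positive semidefinite block matrix.
-/

open Matrix

namespace Matrix

section FinOne

variable {m R : Type*} [CommRing R]

theorem eq_smul_one_of_fin_one (M : Matrix (Fin 1) (Fin 1) R) : M = M 0 0 • 1 := by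
  ext i j
  fin_cases i; fin_cases j
  simp

theorem smul_one_sub_fin_one (r : R) (M : Matrix (Fin 1) (Fin 1) R) :
    r • 1 - M = (r - M 0 0) • 1 := by
  conv_lhs => rw [eq_smul_one_of_fin_one M]
  rw [sub_smul]

theorem mul_fin_one (X : Matrix m (Fin 1) R) (M : Matrix (Fin 1) (Fin 1) R) :
    X * M = M 0 0 • X := by
  conv_lhs => rw [eq_smul_one_of_fin_one M]
  rw [Matrix.mul_smul, Matrix.mul_one]

end FinOne

variable {ι m o K : Type*} [Fintype ι] [Field K]

theorem smul_mul_transpose_inv_smul [Fintype o] (S : Matrix m o K) {r : K} (hr : r ≠ 0) :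
    r • ((r⁻¹ • S) * (r⁻¹ • S)ᵀ) = r⁻¹ • (S * Sᵀ) := by
  rw [transpose_smul, Matrix.smul_mul, Matrix.mul_smul, smul_smul, smul_smul,
    mul_inv_cancel₀ hr, one_mul]

theorem sub_inv_smul_mul_mul_mul_transpose_add (F P : Matrix ι ι K) (H : Matrix (Fin 1) ι K)
    (S : Matrix ι (Fin 1) K) {r : K} (hr : r ≠ 0) :
    (F - r⁻¹ • (S * H)) * P * Hᵀ + (r + (H * P * Hᵀ) 0 0) • (r⁻¹ • S) = F * P * Hᵀ + S := by
  rw [Matrix.sub_mul, Matrix.sub_mul, Matrix.smul_mul, Matrix.smul_mul, Matrix.mul_assoc S,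
    Matrix.mul_assoc S, mul_fin_one, smul_smul, smul_smul, add_mul, mul_inv_cancel₀ hr,
    add_smul, one_smul, mul_comm]
  abel

theorem PosSemidef.sub_inv_smul_mul_transpose [Finite m] [Fintype o] [DecidableEq o]
    {Q : Matrix m m ℝ} {S : Matrix m o ℝ} {r : ℝ} (hr : 0 < r)
    (h : (fromBlocks Q S Sᵀ (r • 1)).PosSemidef) : (Q - r⁻¹ • (S * Sᵀ)).PosSemidef := by
  have hD : (r • 1 : Matrix o o ℝ).PosDef := PosDef.one.smul hr
  let := hD.isUnit.invertible
  have hinv : (r • 1 : Matrix o o ℝ)⁻¹ = r⁻¹ • 1 :=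
    inv_eq_left_inv (by rw [smul_mul_smul_comm, one_mul, inv_mul_cancel₀ hr.ne', one_smul])
  simpa [hinv] using (PosDef.fromBlocks₂₂ Q S hD).mp (by simpa using h)

end Matrix

theorem stmt_11 {n : ℕ}
    (F : Matrix (Fin n) (Fin n) ℝ) (H : Matrix (Fin 1) (Fin n) ℝ)
    (N : Matrix (Fin n) (Fin 1) ℝ) (r0 : ℝ)
    (P : Matrix (Fin n) (Fin n) ℝ)
    (hblk : (Matrix.fromBlocks (P - F * P * Fᵀ) (N - F * P * Hᵀ)
        (N - F * P * Hᵀ)ᵀ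
        (r0 • (1 : Matrix (Fin 1) (Fin 1) ℝ) - H * P * Hᵀ)).PosSemidef)
    (hR : 0 < r0 - (H * P * Hᵀ) 0 0)
    (a : Matrix (Fin n) (Fin n) ℝ) (b : Matrix (Fin 1) (Fin n) ℝ)
    (c : Matrix (Fin n) (Fin 1) ℝ) (β : ℝ) (α η : Matrix (Fin n) (Fin n) ℝ)
    (ha : a = F - (r0 - (H * P * Hᵀ) 0 0)⁻¹ • ((N - F * P * Hᵀ) * H))
    (hb : b = H)
    (hc : c = (r0 - (H * P * Hᵀ) 0 0)⁻¹ • (N - F * P * Hᵀ))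
    (hβ : β = r0 - (H * P * Hᵀ) 0 0)
    (hα : α = (P - F * P * Fᵀ) -
      (r0 - (H * P * Hᵀ) 0 0)⁻¹ • ((N - F * P * Hᵀ) * (N - F * P * Hᵀ)ᵀ))
    (hη : η = P) :
    α.PosSemidef ∧
    a + c * b = F ∧
    η = (α + β • (c * cᵀ)) + (a + c * b) * η * (a + c * b)ᵀ ∧
    β + (b * η * bᵀ) 0 0 = r0 ∧
    a * η * bᵀ + (β + (b * η * bᵀ) 0 0) • c = N ∧
    ∀ k : ℕ, 1 ≤ k →
      (b * (a + c * b) ^ (k - 1) *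
          (a * η * bᵀ + (β + (b * η * bᵀ) 0 0) • c)) 0 0 =
        (H * F ^ (k - 1) * N) 0 0 := by
  subst a b c β α η
  set R := r0 - (H * P * Hᵀ) 0 0
  set S := N - F * P * Hᵀ
  have hF : F - R⁻¹ • (S * H) + R⁻¹ • S * H = F := by rw [Matrix.smul_mul, sub_add_cancel]
  have hlag0 : R + (H * P * Hᵀ) 0 0 = r0 := sub_add_cancel _ _
  have hlag : (F - R⁻¹ • (S * H)) * P * Hᵀ + (R + (H * P * Hᵀ) 0 0) • (R⁻¹ • S) = N := by
    rw [sub_inv_smul_mul_mul_mul_transpose_add F P H S hR.ne', add_sub_cancel]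
  refine ⟨.sub_inv_smul_mul_transpose hR (by rwa [smul_one_sub_fin_one] at hblk), hF, ?_,
    hlag0, hlag, fun k _ => by rw [hlag, hF]⟩
  rw [hF, smul_mul_transpose_inv_smul S hR.ne', sub_add_cancel, sub_add_cancel]
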